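/- arXiv:1008.5259 — 3 statements merged into one kernel-verified Lean document; each statement's English description precedes it below -/
import Mathlib

section
/- (Theorem 5(a)) Let 0 < h < √2/2. Then there is no cylinder circumscribed to the five vertices of the trigonal bipyramid BP: there exist no unit vector u ∈ ℝ³, point c ∈ ℝ³, and ρ ≥ 0 with ‖pᵢ − c‖² − ⟨pᵢ − c, u⟩² = ρ² for all i = 1,…,5. -/
/-!
Write `f(y) = ‖y - c‖² - ⟪y - c, u⟫²` for the squared distance to the axis. For points summing to
zero, the parallel axis theorem gives `∑ f(vᵢ) = ∑ (‖vᵢ‖² - ⟪vᵢ, u⟫²) + n f(0)`, the cross terms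
being linear in `∑ vᵢ`. Both the two apices and the three equatorial vertices sum to zero, so if
`f ≡ ρ²` on all five vertices, comparing the two averages eliminates `c` and `ρ` and leaves
`h² (1 - u₃²) = (1 + u₃²) / 2` for the unit vector `u`. The right side is at least `1/2`, the left
side at most `h² < 1/2`.
-/

/-- The five vertices of the trigonal bipyramid `BP` of interapex half-height `h`. -/
noncomputable def bp (h : ℝ) : Fin 5 → EuclideanSpace ℝ (Fin 3) := fun i =>
  (WithLp.equiv 2 (Fin 3 → ℝ)).symm
    (![![0, 0, h], ![0, 0, -h], ![1, 0, 0], ![-(1/2), Real.sqrt 3 / 2, 0],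
       ![-(1/2), -(Real.sqrt 3 / 2), 0]] i)

open Finset RealInnerProductSpace

section LineDistance

variable {E : Type*} [NormedAddCommGroup E] [InnerProductSpace ℝ E]

def lineSqDist (c u y : E) : ℝ := ‖y - c‖ ^ 2 - ⟪y - c, u⟫ ^ 2

lemma lineSqDist_eq (c u y : E) :
    lineSqDist c u y = lineSqDist 0 u y + lineSqDist c u 0 - 2 * (⟪y, c⟫ - ⟪y, u⟫ * ⟪c, u⟫) := by
  simp only [lineSqDist, sub_zero, zero_sub, norm_neg, inner_neg_left, norm_sub_sq_real,
    inner_sub_left]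
  ring

lemma sum_lineSqDist_of_sum_eq_zero {ι : Type*} (s : Finset ι) (v : ι → E)
    (hv : ∑ i ∈ s, v i = 0) (c u : E) :
    ∑ i ∈ s, lineSqDist c u (v i) = ∑ i ∈ s, lineSqDist 0 u (v i) + #s * lineSqDist c u 0 := by
  have hc : ∑ i ∈ s, ⟪v i, c⟫ = 0 := by rw [← sum_inner, hv, inner_zero_left]
  have hu : ∑ i ∈ s, ⟪v i, u⟫ = 0 := by rw [← sum_inner, hv, inner_zero_left]
  simp_rw [lineSqDist_eq c u (v _), sum_sub_distrib, sum_add_distrib, ← mul_sum, sum_sub_distrib,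
    ← sum_mul, hc, hu, sum_const, nsmul_eq_mul]
  ring

end LineDistance

lemma inner_eq_fin_three (x y : EuclideanSpace ℝ (Fin 3)) :
    ⟪x, y⟫ = x 0 * y 0 + x 1 * y 1 + x 2 * y 2 := by
  simp only [PiLp.inner_apply, RCLike.inner_apply, conj_trivial, Fin.sum_univ_three]
  ring

lemma norm_sq_eq_fin_three (x : EuclideanSpace ℝ (Fin 3)) :
    ‖x‖ ^ 2 = x 0 ^ 2 + x 1 ^ 2 + x 2 ^ 2 := by
  simp only [EuclideanSpace.norm_sq_eq, Real.norm_eq_abs, sq_abs, Fin.sum_univ_three]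

section Bipyramid

variable (h : ℝ)

lemma sum_bp_apex : ∑ i ∈ {0, 1}, bp h i = 0 := by
  ext j; fin_cases j <;> simp [bp]

lemma sum_bp_equator : ∑ i ∈ {2, 3, 4}, bp h i = 0 := by
  ext j; fin_cases j <;> simp [bp]; norm_num

lemma sum_lineSqDist_bp_apex (u : EuclideanSpace ℝ (Fin 3)) :
    ∑ i ∈ {0, 1}, lineSqDist 0 u (bp h i) = 2 * (h ^ 2 * (1 - u 2 ^ 2)) := by
  simp [lineSqDist, norm_sq_eq_fin_three, inner_eq_fin_three, bp]; ring

lemma sum_lineSqDist_bp_equator (u : EuclideanSpace ℝ (Fin 3)) :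
    ∑ i ∈ {2, 3, 4}, lineSqDist 0 u (bp h i) = 3 * (1 - (u 0 ^ 2 + u 1 ^ 2) / 2) := by
  simp [lineSqDist, norm_sq_eq_fin_three, inner_eq_fin_three, bp]
  linear_combination (1 - u 1 ^ 2) / 2 * Real.sq_sqrt (show (0 : ℝ) ≤ 3 by norm_num)

end Bipyramid

/-- Theorem 5(a): for `0 < h < √2/2` there is no cylinder circumscribed to the five
vertices of the trigonal bipyramid `BP`. -/
theorem bipyramid_no_circumscribed_cylinder (h : ℝ) (h0 : 0 < h)
    (hh : h < Real.sqrt 2 / 2) :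
    ¬ ∃ (u c : EuclideanSpace ℝ (Fin 3)) (ρ : ℝ), ‖u‖ = 1 ∧ 0 ≤ ρ ∧
        ∀ i : Fin 5, ‖bp h i - c‖ ^ 2 - (inner ℝ (bp h i - c) u : ℝ) ^ 2 = ρ ^ 2 := by
  rintro ⟨u, c, ρ, hu, -, hρ⟩
  replace hρ : ∀ i, lineSqDist c u (bp h i) = ρ ^ 2 := hρ
  have hu2 : u 0 ^ 2 + u 1 ^ 2 + u 2 ^ 2 = 1 := by rw [← norm_sq_eq_fin_three, hu, one_pow]
  have hapex := sum_lineSqDist_of_sum_eq_zero _ _ (sum_bp_apex h) c u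
  have hequator := sum_lineSqDist_of_sum_eq_zero _ _ (sum_bp_equator h) c u
  simp only [hρ, sum_const, nsmul_eq_mul, sum_lineSqDist_bp_apex, sum_lineSqDist_bp_equator]
    at hapex hequator
  have hh2 : h ^ 2 < 1 / 2 := by
    calc h ^ 2 < (Real.sqrt 2 / 2) ^ 2 := by gcongr
      _ = 1 / 2 := by rw [div_pow, Real.sq_sqrt zero_le_two]; norm_num
  have hkey : h ^ 2 * (1 - u 2 ^ 2) = (1 + u 2 ^ 2) / 2 := by
    rw [show #({0, 1} : Finset (Fin 5)) = 2 from rfl] at hapex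
    rw [show #({2, 3, 4} : Finset (Fin 5)) = 3 from rfl] at hequator
    linear_combination hequator / 3 - hapex / 2 - hu2 / 2
  nlinarith [mul_nonneg (sq_nonneg h) (sq_nonneg (u 2))]
end

section
/- (Theorem 5(b), existence) Let h ≥ √2/2. For k ∈ {0,1,2} let R_k be the rotation of ℝ³ about the third coordinate axis by angle 2πk/3, and for ε ∈ {−1,1} set u_{k,ε} = R_k(0, √(2/(2h²+1)), ε√((2h²−1)/(2h²+1))) and c_k = R_k(1/(4h²+2), 0, 0). Then each u_{k,ε} is a unit vector, ⟨c_k, u_{k,ε}⟩ = 0, and the cylinder with axis point c_k, direction u_{k,ε}, and radius ρ = (4h²+1)/(4h²+2) is circumscribed to the five vertices of BP: ‖pᵢ − c_k‖² − ⟨pᵢ − c_k, u_{k,ε}⟩² = ρ² for all i = 1,…,5. -/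
/-- Rotation about the third coordinate axis by angle `θ`. -/
noncomputable def rotZ (θ : ℝ) (v : EuclideanSpace ℝ (Fin 3)) : EuclideanSpace ℝ (Fin 3) :=
  (WithLp.equiv 2 (Fin 3 → ℝ)).symm
    ![v 0 * Real.cos θ - v 1 * Real.sin θ, v 0 * Real.sin θ + v 1 * Real.cos θ, v 2]

/-- The axis direction `u_{k,ε} = R_k (0, √(2/(2h²+1)), ε√((2h²−1)/(2h²+1)))`. -/
noncomputable def ubp (h : ℝ) (k : Fin 3) (ε : ℝ) : EuclideanSpace ℝ (Fin 3) :=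
  rotZ (2 * Real.pi * (k : ℕ) / 3) ((WithLp.equiv 2 (Fin 3 → ℝ)).symm
    ![0, Real.sqrt (2 / (2 * h ^ 2 + 1)),
      ε * Real.sqrt ((2 * h ^ 2 - 1) / (2 * h ^ 2 + 1))])

/-- The axis point `c_k = R_k (1/(4h²+2), 0, 0)`. -/
noncomputable def cbp (h : ℝ) (k : Fin 3) : EuclideanSpace ℝ (Fin 3) :=
  rotZ (2 * Real.pi * (k : ℕ) / 3)
    ((WithLp.equiv 2 (Fin 3 → ℝ)).symm ![1 / (4 * h ^ 2 + 2), 0, 0])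

/-! Rotation by `2π/3` about the third axis is a linear isometry fixing the apexes and cycling the
three equatorial vertices, and it carries the axis `(c₀, u₀)` to `(c_k, u_k)`. Distances to the
axis are therefore the same for every `k`, and for `k = 0` they are a direct computation. -/

open Real

section LineDistance

variable {E F : Type*} [NormedAddCommGroup E] [InnerProductSpace ℝ E]
  [NormedAddCommGroup F] [InnerProductSpace ℝ F]

/-- The squared distance from `y` to the line through `c` with direction `u`, when `‖u‖ = 1`. -/
def sqDistToLine (c u y : E) : ℝ := ‖y - c‖ ^ 2 - inner ℝ (y - c) u ^ 2

theorem LinearIsometry.sqDistToLine_map (f : E →ₗᵢ[ℝ] F) (c u y : E) :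
    sqDistToLine (f c) (f u) (f y) = sqDistToLine c u y := by
  simp only [sqDistToLine, ← map_sub, f.norm_map, f.inner_map_map]

end LineDistance

theorem sqDistToLine_eq (c u y : EuclideanSpace ℝ (Fin 3)) :
    sqDistToLine c u y = (y 0 - c 0) ^ 2 + (y 1 - c 1) ^ 2 + (y 2 - c 2) ^ 2
      - ((y 0 - c 0) * u 0 + (y 1 - c 1) * u 1 + (y 2 - c 2) * u 2) ^ 2 := by
  simp only [sqDistToLine, EuclideanSpace.real_norm_sq_eq, PiLp.sub_apply, Fin.sum_univ_three,
    PiLp.inner_apply, RCLike.inner_apply, conj_trivial]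
  ring

theorem rotZ_zero (v : EuclideanSpace ℝ (Fin 3)) : rotZ 0 v = v := by
  ext i; fin_cases i <;> simp [rotZ]

theorem rotZ_add (α β : ℝ) (v : EuclideanSpace ℝ (Fin 3)) :
    rotZ (α + β) v = rotZ α (rotZ β v) := by
  ext i; fin_cases i <;> simp [rotZ, cos_add, sin_add] <;> ring

noncomputable def rotZLinearIsometry (θ : ℝ) :
    EuclideanSpace ℝ (Fin 3) →ₗᵢ[ℝ] EuclideanSpace ℝ (Fin 3) where
  toFun := rotZ θ
  map_add' x y := by ext i; fin_cases i <;> simp [rotZ] <;> ring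
  map_smul' a x := by ext i; fin_cases i <;> simp [rotZ] <;> ring
  norm_map' x := by
    rw [← sq_eq_sq₀ (norm_nonneg _) (norm_nonneg _), EuclideanSpace.real_norm_sq_eq,
      EuclideanSpace.real_norm_sq_eq]
    simp only [LinearMap.coe_mk, AddHom.coe_mk, rotZ, WithLp.equiv_symm_apply, Fin.sum_univ_three,
      PiLp.toLp_apply, Matrix.cons_val_zero, Matrix.cons_val_one, Matrix.cons_val]
    linear_combination (x 0 ^ 2 + x 1 ^ 2) * sin_sq_add_cos_sq θ

theorem coe_rotZLinearIsometry (θ : ℝ) : ⇑(rotZLinearIsometry θ) = rotZ θ := rfl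

theorem exists_bp_eq_rotZ_two_pi_div_three (h : ℝ) (i : Fin 5) :
    ∃ j, bp h i = rotZ (2 * π / 3) (bp h j) := by
  have hcos : cos (2 * π / 3) = -(1 / 2) := by
    rw [show 2 * π / 3 = π - π / 3 by ring, cos_pi_sub, cos_pi_div_three]
  have hsin : sin (2 * π / 3) = √3 / 2 := by
    rw [show 2 * π / 3 = π - π / 3 by ring, sin_pi_sub, sin_pi_div_three]
  have h3 : √3 ^ 2 = 3 := sq_sqrt (by norm_num)
  refine ⟨![0, 1, 4, 2, 3] i, ?_⟩
  fin_cases i <;> ext j <;> fin_cases j <;> simp [bp, rotZ, hcos, hsin] <;> ring_nf <;>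
    norm_num [h3]

theorem exists_bp_eq_rotZ (h : ℝ) (k : Fin 3) (i : Fin 5) :
    ∃ j, bp h i = rotZ (2 * π * (k : ℕ) / 3) (bp h j) := by
  fin_cases k
  · exact ⟨i, by simp [rotZ_zero]⟩
  · simpa using exists_bp_eq_rotZ_two_pi_div_three h i
  · obtain ⟨j, hj⟩ := exists_bp_eq_rotZ_two_pi_div_three h i
    obtain ⟨l, hl⟩ := exists_bp_eq_rotZ_two_pi_div_three h j
    refine ⟨l, ?_⟩
    rw [hj, hl, ← rotZ_add]
    congr 1
    push_cast
    ring

theorem ubp_eq_rotZ (h : ℝ) (k : Fin 3) (ε : ℝ) :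
    ubp h k ε = rotZ (2 * π * (k : ℕ) / 3) (ubp h 0 ε) := by
  simp [ubp, rotZ_zero]

theorem cbp_eq_rotZ (h : ℝ) (k : Fin 3) :
    cbp h k = rotZ (2 * π * (k : ℕ) / 3) (cbp h 0) := by
  simp [cbp, rotZ_zero]

theorem ubp_zero (h ε : ℝ) :
    ubp h 0 ε = !₂[0, √(2 / (2 * h ^ 2 + 1)), ε * √((2 * h ^ 2 - 1) / (2 * h ^ 2 + 1))] := by
  simp [ubp, rotZ_zero]

theorem cbp_zero (h : ℝ) : cbp h 0 = !₂[1 / (4 * h ^ 2 + 2), 0, 0] := by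
  simp [cbp, rotZ_zero]

theorem ubp_zero_apply_zero (h ε : ℝ) : ubp h 0 ε 0 = 0 := by
  rw [ubp_zero]; rfl

theorem ubp_zero_apply_one_sq (h ε : ℝ) : ubp h 0 ε 1 ^ 2 = 2 / (2 * h ^ 2 + 1) := by
  rw [ubp_zero]
  exact sq_sqrt (by positivity)

theorem inner_cbp_zero_ubp_zero (h ε : ℝ) : inner ℝ (cbp h 0) (ubp h 0 ε) = 0 := by
  simp [cbp_zero, ubp_zero, PiLp.inner_apply, Fin.sum_univ_three]

section Axis

variable {h ε : ℝ} (hh : 1 ≤ 2 * h ^ 2) (hε : ε ^ 2 = 1)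
include hh hε

theorem ubp_zero_apply_two_sq : ubp h 0 ε 2 ^ 2 = (2 * h ^ 2 - 1) / (2 * h ^ 2 + 1) := by
  rw [ubp_zero, PiLp.toLp_apply, Matrix.cons_val_two, Matrix.tail_cons, Matrix.head_cons,
    mul_pow, hε, one_mul]
  exact sq_sqrt (div_nonneg (by linarith) (by positivity))

theorem norm_ubp_zero : ‖ubp h 0 ε‖ = 1 := by
  rw [← pow_eq_one_iff_of_nonneg (norm_nonneg _) two_ne_zero, EuclideanSpace.real_norm_sq_eq,
    Fin.sum_univ_three, ubp_zero_apply_zero, ubp_zero_apply_one_sq, ubp_zero_apply_two_sq hh hε]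
  field_simp
  ring

theorem sqDistToLine_cbp_zero_ubp_zero (i : Fin 5) :
    sqDistToLine (cbp h 0) (ubp h 0 ε) (bp h i) = ((4 * h ^ 2 + 1) / (4 * h ^ 2 + 2)) ^ 2 := by
  have h3 : √3 ^ 2 = 3 := sq_sqrt (by norm_num)
  rw [sqDistToLine_eq, cbp_zero]
  fin_cases i <;>
    simp [bp, mul_pow, div_pow, ubp_zero_apply_zero, ubp_zero_apply_one_sq,
      ubp_zero_apply_two_sq hh hε, h3] <;>
    field_simp <;> ring

end Axis

/-- Theorem 5(b), existence: for `h ≥ √2/2`, each `u_{k,ε}` is a unit vector orthogonal to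
`c_k`, and the cylinder with axis point `c_k`, direction `u_{k,ε}` and radius
`(4h²+1)/(4h²+2)` is circumscribed to the five vertices of `BP`. -/
theorem bipyramid_six_circumscribed_cylinders_exist (h : ℝ)
    (hh : Real.sqrt 2 / 2 ≤ h) (k : Fin 3) (ε : ℝ) (hε : ε = 1 ∨ ε = -1) :
    ‖ubp h k ε‖ = 1 ∧ (inner ℝ (cbp h k) (ubp h k ε) : ℝ) = 0 ∧
      ∀ i : Fin 5, ‖bp h i - cbp h k‖ ^ 2 - (inner ℝ (bp h i - cbp h k) (ubp h k ε) : ℝ) ^ 2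
        = ((4 * h ^ 2 + 1) / (4 * h ^ 2 + 2)) ^ 2 := by
  have hh' : 1 ≤ 2 * h ^ 2 :=
    calc 1 = 2 * (√2 / 2) ^ 2 := by rw [div_pow, sq_sqrt zero_le_two]; norm_num
      _ ≤ 2 * h ^ 2 := by gcongr
  have hε' : ε ^ 2 = 1 := by rcases hε with rfl | rfl <;> norm_num
  set R := rotZLinearIsometry (2 * π * (k : ℕ) / 3)
  have hu : ubp h k ε = R (ubp h 0 ε) := ubp_eq_rotZ h k ε
  have hc : cbp h k = R (cbp h 0) := cbp_eq_rotZ h k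
  refine ⟨?_, ?_, fun i => ?_⟩
  · rw [hu, R.norm_map, norm_ubp_zero hh' hε']
  · rw [hc, hu, R.inner_map_map, inner_cbp_zero_ubp_zero]
  · obtain ⟨j, hj⟩ := exists_bp_eq_rotZ h k i
    change sqDistToLine (cbp h k) (ubp h k ε) (bp h i) = _
    rw [hj, hu, hc, ← coe_rotZLinearIsometry, R.sqDistToLine_map,
      sqDistToLine_cbp_zero_ubp_zero hh' hε']
end

section
/- (Theorem 5(b), completeness) Let h ≥ √2/2. If the cylinder with axis point c, unit direction u, and radius ρ ≥ 0 is circumscribed to the five vertices of BP, then ρ = (4h²+1)/(4h²+2) and u = δ·u_{k,ε} for some δ ∈ {−1,1}, k ∈ {0,1,2}, ε ∈ {−1,1}, where u_{k,ε} = R_k(0, √(2/(2h²+1)), ε√((2h²−1)/(2h²+1))) and R_k is the rotation about the third coordinate axis by angle 2πk/3. In particular, for h > √2/2 there are exactly six circumscribed cylinders, all of the same radius (4h²+1)/(4h²+2). -/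
open Real

section LineDistance

variable {E : Type*} [NormedAddCommGroup E] [InnerProductSpace ℝ E] {u : E}

theorem inner_sub_inner_smul_self_eq_zero (hu : ‖u‖ = 1) (c : E) :
    inner ℝ (c - inner ℝ c u • u) u = 0 := by
  rw [inner_sub_left, real_inner_smul_left, real_inner_self_eq_norm_sq, hu]
  ring

theorem norm_sub_sq_sub_inner_sq_eq (hu : ‖u‖ = 1) (p c : E) :
    ‖p - c‖ ^ 2 - inner ℝ (p - c) u ^ 2 =
      ‖p - (c - inner ℝ c u • u)‖ ^ 2 - inner ℝ p u ^ 2 := by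
  have huu : inner ℝ u u = (1 : ℝ) := by rw [real_inner_self_eq_norm_sq, hu, one_pow]
  simp only [← real_inner_self_eq_norm_sq, inner_sub_left, inner_sub_right, real_inner_smul_left,
    real_inner_smul_right, real_inner_comm u, huu]
  ring

end LineDistance

theorem EuclideanSpace.norm_sq_fin_three (u : EuclideanSpace ℝ (Fin 3)) :
    ‖u‖ ^ 2 = u 0 ^ 2 + u 1 ^ 2 + u 2 ^ 2 := by
  simp [EuclideanSpace.norm_sq_eq, Fin.sum_univ_three]

theorem EuclideanSpace.norm_sub_sq_sub_inner_sq_fin_three (p c u : EuclideanSpace ℝ (Fin 3)) :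
    ‖p - c‖ ^ 2 - inner ℝ p u ^ 2 = (p 0 - c 0) ^ 2 + (p 1 - c 1) ^ 2 + (p 2 - c 2) ^ 2
      - (p 0 * u 0 + p 1 * u 1 + p 2 * u 2) ^ 2 := by
  simp [EuclideanSpace.norm_sq_eq, PiLp.inner_apply, Fin.sum_univ_three, mul_comm]

section BipyramidAlgebra

variable {a b w x y z h ρ : ℝ}

theorem apex_pair_eqs (hh : h ≠ 0)
    (e₁ : x ^ 2 + y ^ 2 + (h - z) ^ 2 - (h * w) ^ 2 = ρ ^ 2)
    (e₂ : x ^ 2 + y ^ 2 + (-h - z) ^ 2 - (h * w) ^ 2 = ρ ^ 2) :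
    z = 0 ∧ ρ ^ 2 = x ^ 2 + y ^ 2 + h ^ 2 * (1 - w ^ 2) := by
  have hz : h * z = 0 := by linear_combination (e₂ - e₁) / 4
  obtain rfl : z = 0 := (mul_eq_zero.mp hz).resolve_left hh
  exact ⟨rfl, by linear_combination -e₁⟩

theorem equator_triangle_eqs
    (e₃ : (1 - x) ^ 2 + y ^ 2 + z ^ 2 - a ^ 2 = ρ ^ 2)
    (e₄ : (-2⁻¹ - x) ^ 2 + (√3 / 2 - y) ^ 2 + z ^ 2 - (-(2⁻¹ * a) + √3 / 2 * b) ^ 2 = ρ ^ 2)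
    (e₅ : (-2⁻¹ - x) ^ 2 + (-(√3 / 2) - y) ^ 2 + z ^ 2 - (-(2⁻¹ * a) + -(√3 / 2 * b)) ^ 2 =
      ρ ^ 2) :
    4 * x = b ^ 2 - a ^ 2 ∧ 2 * y = a * b ∧
      ρ ^ 2 = 1 + x ^ 2 + y ^ 2 + z ^ 2 - (a ^ 2 + b ^ 2) / 2 := by
  have h3 : √3 ^ 2 = 3 := Real.sq_sqrt (by norm_num)
  have hy : √3 * (2 * y - a * b) = 0 := by linear_combination e₅ - e₄
  have hy : 2 * y = a * b := by
    linear_combination (mul_eq_zero.mp hy).resolve_left (by positivity)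
  refine ⟨?_, hy, ?_⟩
  · linear_combination (-4/3) * e₃ + (2/3) * (e₄ + e₅) + ((b ^ 2 - 1) / 3) * h3
  · linear_combination -(e₃ + e₄ + e₅) / 3 + ((1 - b ^ 2) / 6) * h3

theorem bp_axis_eqs_of_circumscribed (hh : h ≠ 0) {c u : EuclideanSpace ℝ (Fin 3)}
    (hu : u 0 ^ 2 + u 1 ^ 2 + u 2 ^ 2 = 1) (horth : inner ℝ c u = 0)
    (hcirc : ∀ i, ‖bp h i - c‖ ^ 2 - inner ℝ (bp h i) u ^ 2 = ρ ^ 2) :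
    (2 * h ^ 2 + 1) * (u 0 ^ 2 + u 1 ^ 2) = 2 ∧ u 0 * (u 0 ^ 2 - 3 * u 1 ^ 2) = 0 ∧
      ρ ^ 2 = h ^ 2 * (u 0 ^ 2 + u 1 ^ 2) + (u 0 ^ 2 + u 1 ^ 2) ^ 2 / 16 := by
  have e i := (EuclideanSpace.norm_sub_sq_sub_inner_sq_fin_three _ _ _).symm.trans (hcirc i)
  have e₁ := e 0
  have e₂ := e 1
  have e₃ := e 2
  have e₄ := e 3
  have e₅ := e 4
  simp only [bp, WithLp.equiv_symm_apply, Matrix.cons_val_zero, Matrix.cons_val_one,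
    Matrix.cons_val, one_div, zero_sub, even_two, Even.neg_pow, zero_mul, add_zero, zero_add,
    neg_mul, one_mul] at e₁ e₂ e₃ e₄ e₅
  have horth : c 0 * u 0 + c 1 * u 1 + c 2 * u 2 = 0 := by
    simpa [PiLp.inner_apply, Fin.sum_univ_three, mul_comm] using horth
  obtain ⟨hz, hρ₁⟩ := apex_pair_eqs hh e₁ e₂
  obtain ⟨hx, hy, hρ₂⟩ := equator_triangle_eqs e₃ e₄ e₅
  refine ⟨?_, ?_, ?_⟩
  · linear_combination -2 * (hρ₁ - hρ₂) + 2 * h ^ 2 * hu + 2 * c 2 * hz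
  · linear_combination -4 * horth + u 0 * hx + 2 * u 1 * hy + 4 * u 2 * hz
  · linear_combination hρ₁ - h ^ 2 * hu + (c 0 + (u 1 ^ 2 - u 0 ^ 2) / 4) / 4 * hx
      + (c 1 + u 0 * u 1 / 2) / 2 * hy

end BipyramidAlgebra

theorem radius_eq_of_sq_eq {h q ρ : ℝ} (hρ : 0 ≤ ρ) (hq : (2 * h ^ 2 + 1) * q = 2)
    (hρq : ρ ^ 2 = h ^ 2 * q + q ^ 2 / 16) : ρ = (4 * h ^ 2 + 1) / (4 * h ^ 2 + 2) := by
  have hq : q = 2 / (2 * h ^ 2 + 1) := by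
    rw [eq_div_iff (by positivity)]
    linear_combination hq
  refine (pow_left_inj₀ hρ (by positivity) two_ne_zero).mp ?_
  rw [hρq, hq]
  field_simp
  ring

-- The angles `2 * π * (k : ℕ) / 3` of `ubp` for `k = 1, 2`, in the form `simp` leaves them in.
@[simp]
theorem cos_two_pi_div_three : cos (2 * π / 3) = -(1 / 2) := by
  rw [show 2 * π / 3 = π - π / 3 by ring, cos_pi_sub, cos_pi_div_three]

@[simp]
theorem sin_two_pi_div_three : sin (2 * π / 3) = √3 / 2 := by
  rw [show 2 * π / 3 = π - π / 3 by ring, sin_pi_sub, sin_pi_div_three]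

@[simp]
theorem cos_four_pi_div_three : cos (2 * π * 2 / 3) = -(1 / 2) := by
  rw [show 2 * π * 2 / 3 = π / 3 + π by ring, cos_add_pi, cos_pi_div_three]

@[simp]
theorem sin_four_pi_div_three : sin (2 * π * 2 / 3) = -(√3 / 2) := by
  rw [show 2 * π * 2 / 3 = π / 3 + π by ring, sin_add_pi, sin_pi_div_three]

theorem exists_sign_fin_three_of_mul_sub_three_mul_sq_eq_zero {a b r : ℝ}
    (hr : a ^ 2 + b ^ 2 = r ^ 2) (h3 : a * (a ^ 2 - 3 * b ^ 2) = 0) :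
    ∃ δ : ℝ, (δ = 1 ∨ δ = -1) ∧ ∃ k : Fin 3,
      a = δ * -(r * sin (2 * π * (k : ℕ) / 3)) ∧ b = δ * (r * cos (2 * π * (k : ℕ) / 3)) := by
  have hs : √3 ^ 2 = 3 := Real.sq_sqrt (by norm_num)
  rcases mul_eq_zero.mp h3 with ha | ha
  · have hb : (b - r) * (b + r) = 0 := by linear_combination hr - a * ha
    rcases mul_eq_zero.mp hb with hb | hb
    · exact ⟨1, .inl rfl, 0, by simp [ha], by simp; linear_combination hb⟩
    · exact ⟨-1, .inr rfl, 0, by simp [ha], by simp; linear_combination hb⟩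
  · have hb : (2 * b - r) * (2 * b + r) = 0 := by linear_combination hr - ha
    have hab : (a - √3 * b) * (a + √3 * b) = 0 := by linear_combination ha - b ^ 2 * hs
    rcases mul_eq_zero.mp hab with hab | hab <;> rcases mul_eq_zero.mp hb with hb | hb
    · exact ⟨-1, .inr rfl, 1, by simp; linear_combination hab + √3 / 2 * hb,
        by simp; linear_combination hb / 2⟩
    · exact ⟨1, .inl rfl, 1, by simp; linear_combination hab + √3 / 2 * hb,
        by simp; linear_combination hb / 2⟩
    · exact ⟨-1, .inr rfl, 2, by simp; linear_combination hab - √3 / 2 * hb,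
        by simp; linear_combination hb / 2⟩
    · exact ⟨1, .inl rfl, 2, by simp; linear_combination hab - √3 / 2 * hb,
        by simp; linear_combination hb / 2⟩

theorem ubp_eq (h : ℝ) (k : Fin 3) (ε : ℝ) :
    ubp h k ε = !₂[-(√(2 / (2 * h ^ 2 + 1)) * sin (2 * π * (k : ℕ) / 3)),
      √(2 / (2 * h ^ 2 + 1)) * cos (2 * π * (k : ℕ) / 3),
      ε * √((2 * h ^ 2 - 1) / (2 * h ^ 2 + 1))] := by
  ext i
  fin_cases i <;> simp [ubp, rotZ]

theorem exists_eq_smul_ubp {h : ℝ} (hh : 1 ≤ 2 * h ^ 2) {u : EuclideanSpace ℝ (Fin 3)}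
    (hu : u 0 ^ 2 + u 1 ^ 2 + u 2 ^ 2 = 1) (hq : (2 * h ^ 2 + 1) * (u 0 ^ 2 + u 1 ^ 2) = 2)
    (h3 : u 0 * (u 0 ^ 2 - 3 * u 1 ^ 2) = 0) :
    ∃ (δ : ℝ) (k : Fin 3) (ε : ℝ), (δ = 1 ∨ δ = -1) ∧ (ε = 1 ∨ ε = -1) ∧
      u = δ • ubp h k ε := by
  have hr : u 0 ^ 2 + u 1 ^ 2 = √(2 / (2 * h ^ 2 + 1)) ^ 2 := by
    rw [Real.sq_sqrt (by positivity), eq_div_iff (by positivity)]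
    linear_combination hq
  have hw : u 2 ^ 2 = √((2 * h ^ 2 - 1) / (2 * h ^ 2 + 1)) ^ 2 := by
    rw [Real.sq_sqrt (div_nonneg (by linarith) (by positivity)), eq_div_iff (by positivity)]
    linear_combination (2 * h ^ 2 + 1) * hu - hq
  obtain ⟨δ, hδ, k, ha, hb⟩ := exists_sign_fin_three_of_mul_sub_three_mul_sq_eq_zero hr h3
  obtain ⟨ε, hε, hw⟩ : ∃ ε : ℝ, (ε = 1 ∨ ε = -1) ∧
      u 2 = δ * (ε * √((2 * h ^ 2 - 1) / (2 * h ^ 2 + 1))) := by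
    rcases sq_eq_sq_iff_eq_or_eq_neg.mp hw with hw | hw <;> rcases hδ with rfl | rfl
    · exact ⟨1, .inl rfl, by rw [hw]; ring⟩
    · exact ⟨-1, .inr rfl, by rw [hw]; ring⟩
    · exact ⟨-1, .inr rfl, by rw [hw]; ring⟩
    · exact ⟨1, .inl rfl, by rw [hw]; ring⟩
  refine ⟨δ, k, ε, hδ, hε, ?_⟩
  rw [ubp_eq]
  ext i
  fin_cases i <;> simp [ha, hb, hw]

/-- Theorem 5(b), completeness: for `h ≥ √2/2`, every cylinder circumscribed to the five
vertices of `BP` has radius `(4h²+1)/(4h²+2)` and its axis direction is, up to sign, one of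
the six directions `u_{k,ε}`. -/
theorem bipyramid_circumscribed_cylinders_complete (h : ℝ)
    (hh : Real.sqrt 2 / 2 ≤ h) (u c : EuclideanSpace ℝ (Fin 3)) (ρ : ℝ)
    (hu : ‖u‖ = 1) (hρ : 0 ≤ ρ)
    (hcirc : ∀ i : Fin 5,
      ‖bp h i - c‖ ^ 2 - (inner ℝ (bp h i - c) u : ℝ) ^ 2 = ρ ^ 2) :
    ρ = (4 * h ^ 2 + 1) / (4 * h ^ 2 + 2) ∧
      ∃ (δ : ℝ) (k : Fin 3) (ε : ℝ), (δ = 1 ∨ δ = -1) ∧ (ε = 1 ∨ ε = -1) ∧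
        u = δ • ubp h k ε := by
  have hh₀ : 0 < h := lt_of_lt_of_le (by positivity) hh
  have hh₁ : 1 ≤ 2 * h ^ 2 := by
    have := pow_le_pow_left₀ (by positivity) hh 2
    rw [div_pow, Real.sq_sqrt zero_le_two] at this
    linarith
  have hu' : u 0 ^ 2 + u 1 ^ 2 + u 2 ^ 2 = 1 := by
    rw [← EuclideanSpace.norm_sq_fin_three, hu, one_pow]
  obtain ⟨hq, h3, hρq⟩ := bp_axis_eqs_of_circumscribed hh₀.ne' hu'
    (inner_sub_inner_smul_self_eq_zero hu c)
    fun i => (norm_sub_sq_sub_inner_sq_eq hu _ c).symm.trans (hcirc i)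
  exact ⟨radius_eq_of_sq_eq hρ hq hρq, exists_eq_smul_ubp hh₁ hu' hq h3⟩
end
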